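/- Let 𝒢 be a set of pairwise separated subtrees of a rooted binary tree G^{Init} whose leaf sets partition L(G^{Init}), with |𝒢| = k ≥ 2. Then there is always a lowest node x of G^{Init} with |𝒢(x)| ≥ 2, and for such x, each child subtree of x contains exactly one tree of 𝒢, which must be the whole child subtree. -/

import Mathlib

inductive BTree (α : Type) where
  | leaf : α → BTree α
  | node : BTree α → BTree α → BTree α
deriving DecidableEq

namespace BTree

variable {α : Type} [DecidableEq α] {σ : Type} [DecidableEq σ] {γ : Type} [DecidableEq γ]

/-- leaf (label) set of a tree -/
def leaves : BTree α → Finset α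
  | leaf a => {a}
  | node l r => leaves l ∪ leaves r

/-- the leaf labels are pairwise distinct -/
def nodupLeaves : BTree α → Prop
  | leaf _ => True
  | node l r => nodupLeaves l ∧ nodupLeaves r ∧ Disjoint (leaves l) (leaves r)

/-- the (unordered) bipartition `(Ll, Lr)` is compatible with the tree:
the whole leaf set lies in one part, or the leaf sets of the two root child
subtrees lie in opposite parts. -/
def compatible : BTree α → Finset α → Finset α → Prop
  | leaf a, Ll, Lr => a ∈ Ll ∨ a ∈ Lr
  | node l r, Ll, Lr =>
      leaves l ∪ leaves r ⊆ Ll ∨ leaves l ∪ leaves r ⊆ Lr ∨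
      (leaves l ⊆ Ll ∧ leaves r ⊆ Lr) ∨ (leaves l ⊆ Lr ∧ leaves r ⊆ Ll)

/-- union of the leaf sets of a list of trees -/
def unionLeaves (Gs : List (BTree α)) : Finset α :=
  Gs.foldr (fun g acc => leaves g ∪ acc) ∅

/-- `(Ll, Lr)` is a bipartition of the union of the leaf sets (both parts
nonempty) compatible with every tree in the list. -/
def isCompBip (Gs : List (BTree α)) (Ll Lr : Finset α) : Prop :=
  Ll ∪ Lr = unionLeaves Gs ∧ Disjoint Ll Lr ∧ Ll.Nonempty ∧ Lr.Nonempty ∧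
    ∀ G ∈ Gs, compatible G Ll Lr

/-- restriction `G|_L` : remove the leaves not in `L` and suppress the
resulting degree-2 nodes; `none` if no leaf of `G` lies in `L`. -/
def restrict : BTree α → Finset α → Option (BTree α)
  | leaf a, L => if a ∈ L then some (leaf a) else none
  | node l r, L =>
      match restrict l L, restrict r L with
      | some l', some r' => some (node l' r')
      | some l', none => some l'
      | none, some r' => some r'
      | none, none => none

/-- isomorphism of rooted leaf-labeled trees (children are unordered) -/
inductive Iso : BTree α → BTree α → Prop
  | leaf (a : α) : Iso (leaf a) (leaf a)
  | node {l r l' r' : BTree α} : Iso l l' → Iso r r' → Iso (node l r) (node l' r')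
  | swap {l r l' r' : BTree α} : Iso l r' → Iso r l' → Iso (node l r) (node l' r')

/-- `G` displays `G'` : the restriction of `G` to the leaves of `G'` is
isomorphic to `G'` (preserving leaf labels). -/
def displays (G G' : BTree α) : Prop :=
  ∃ t, restrict G (leaves G') = some t ∧ Iso t G'

/-- `Subtree t T` : `t` is a complete rooted subtree of `T` (i.e. `t = T[x]`
for some node `x` of `T`).  Equivalently, the root of `T` is a (weak)
ancestor of the root of `t`. -/
inductive Subtree : BTree α → BTree α → Prop
  | refl (t : BTree α) : Subtree t t
  | left {t l r : BTree α} : Subtree t l → Subtree t (node l r)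
  | right {t l r : BTree α} : Subtree t r → Subtree t (node l r)

/-- two nodes (complete subtrees) are separated: neither is a (weak)
ancestor of the other -/
def separated (u v : BTree α) : Prop := ¬ Subtree u v ∧ ¬ Subtree v u

/-- the subtree rooted at the lowest common ancestor of the leaf set `L` -/
def lcaSub : BTree α → Finset α → BTree α
  | leaf a, _ => leaf a
  | node l r, L =>
      if L ⊆ leaves l then lcaSub l L
      else if L ⊆ leaves r then lcaSub r L
      else node l r

/-- `T1` and `T2` induce the same rooted triplet topology on `{a, b, c}` -/
def sameTriplet (T1 T2 : BTree α) (a b c : α) : Prop :=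
  ∃ t1 t2, restrict T1 {a, b, c} = some t1 ∧ restrict T2 {a, b, c} = some t2 ∧ Iso t1 t2

/-- `GTR` is triplet respecting w.r.t. `GInit` and the family `Gs` : for any
three leaves taken from three distinct trees of `Gs`, `GInit` and `GTR`
induce the same rooted triplet topology. -/
def tripletRespecting (GInit GTR : BTree α) (Gs : List (BTree α)) : Prop :=
  ∀ G1 ∈ Gs, ∀ G2 ∈ Gs, ∀ G3 ∈ Gs, G1 ≠ G2 → G1 ≠ G3 → G2 ≠ G3 →
    ∀ a ∈ leaves G1, ∀ b ∈ leaves G2, ∀ c ∈ leaves G3, sameTriplet GInit GTR a b c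

/-- at least two (distinct) trees of `Gs` are subtrees of `t` : `|𝒢(t)| ≥ 2` -/
def atLeastTwo (Gs : List (BTree α)) (t : BTree α) : Prop :=
  ∃ Gi ∈ Gs, ∃ Gj ∈ Gs, Gi ≠ Gj ∧ Subtree Gi t ∧ Subtree Gj t

/-- `Graft T' T R` : `R` is obtained from `T` by grafting `T'` at some node
`x*` of `T`, i.e. subdividing the edge above `x*` (or adding a new root if
`x*` is the root) and attaching `T'` as the new sibling of `x*`. -/
inductive Graft (T' : BTree α) : BTree α → BTree α → Prop
  | atRootL (T : BTree α) : Graft T' T (node T' T)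
  | atRootR (T : BTree α) : Graft T' T (node T T')
  | left {l r g : BTree α} : Graft T' l g → Graft T' (node l r) (node g r)
  | right {l r g : BTree α} : Graft T' r g → Graft T' (node l r) (node l g)

/-- number of edges from the root of `u` down to the node `v`, if `v` is a
node (complete subtree) of `u` -/
def edist : BTree σ → BTree σ → Option ℕ
  | leaf a, v => if leaf a = v then some 0 else none
  | node l r, v =>
      if node l r = v then some 0 else
      match edist l v, edist r v with
      | some n, _ => some (n + 1)
      | none, some n => some (n + 1)
      | none, none => none

/-- number of nodes strictly between an ancestor `u` and a descendant `v` -/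
def inter (u v : BTree σ) : ℕ := (edist u v).getD 1 - 1

/-- node (`lca`) of the species tree `S` associated to a set `L` of genes -/
def specOf (S : BTree σ) (s : γ → σ) (L : Finset γ) : BTree σ := lcaSub S (L.image s)

/-- the species-tree node `s(x)` associated with a gene-tree node `x`
(lca of the species of the leaves below `x`) -/
def spec (S : BTree σ) (s : γ → σ) (t : BTree γ) : BTree σ := specOf S s (leaves t)

/-- the local LCA-reconciliation cost of a node whose own mapping is `su`
and whose children map to `sl` and `sr` -/
def localCost (su sl sr : BTree σ) : ℕ :=
  inter su sl + inter su sr +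
    (if su = sl ∧ su = sr then 1 else if su = sl ∨ su = sr then 2 else 0)

/-- number of duplication nodes of the LCA-reconciliation -/
def dupCount (S : BTree σ) (s : γ → σ) : BTree γ → ℕ
  | leaf _ => 0
  | node l r =>
      dupCount S s l + dupCount S s r +
      (if spec S s (node l r) = spec S s l ∨ spec S s (node l r) = spec S s r then 1 else 0)

/-- minimum number of losses of the LCA-reconciliation: for each edge `(x,c)`,
`inter(s(x), s(c))` losses, plus one more loss for each child `c` of a
duplication node `x` with `s(c) ≠ s(x)` -/
def lossCount (S : BTree σ) (s : γ → σ) : BTree γ → ℕ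
  | leaf _ => 0
  | node l r =>
      lossCount S s l + lossCount S s r +
      (if spec S s (node l r) = spec S s l ∨ spec S s (node l r) = spec S s r then
        (inter (spec S s (node l r)) (spec S s l) +
          if spec S s l = spec S s (node l r) then 0 else 1) +
        (inter (spec S s (node l r)) (spec S s r) +
          if spec S s r = spec S s (node l r) then 0 else 1)
      else
        inter (spec S s (node l r)) (spec S s l) + inter (spec S s (node l r)) (spec S s r))

/-- sum over all internal nodes of the local LCA-reconciliation costs -/
def totalLocal (S : BTree σ) (s : γ → σ) : BTree γ → ℕ
  | leaf _ => 0
  | node l r =>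
      totalLocal S s l + totalLocal S s r +
      localCost (spec S s (node l r)) (spec S s l) (spec S s r)

/-- `G` is a supertree for `Gs` : a tree on the union of the leaf sets
(each leaf once) displaying every tree of `Gs` -/
def isSupertree (Gs : List (BTree γ)) (G : BTree γ) : Prop :=
  leaves G = unionLeaves Gs ∧ nodupLeaves G ∧ ∀ Gi ∈ Gs, displays G Gi

/-- `MinSGT` : minimum LCA-reconciliation cost over all supertrees -/
noncomputable def reconMin (S : BTree σ) (s : γ → σ) (Gs : List (BTree γ)) : ℕ :=
  sInf {c | ∃ G : BTree γ, isSupertree Gs G ∧ totalLocal S s G = c}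

/-- restrictions `G_i|_L` of the trees of the list (dropping empty ones) -/
def restrictList (Gs : List (BTree γ)) (L : Finset γ) : List (BTree γ) :=
  Gs.filterMap fun G => restrict G L

/-- the four possible ordered choices for distributing a tree into the two
parts of a bipartition: whole tree left, whole tree right, left subtree
left & right subtree right, left subtree right & right subtree left -/
def pick : BTree α → ℕ → Finset α × Finset α
  | G, 0 => (leaves G, ∅)
  | G, 1 => (∅, leaves G)
  | node l r, 2 => (leaves l, leaves r)
  | node l r, _ => (leaves r, leaves l)
  | G, _ => (∅, leaves G)

/-- left part produced by a distribution `f` of choices -/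
def partsLeft (Gs : List (BTree α)) (f : Fin Gs.length → Fin 4) : Finset α :=
  Finset.univ.biUnion fun i => (pick (Gs.get i) (f i).val).1

/-- right part produced by a distribution `f` of choices -/
def partsRight (Gs : List (BTree α)) (f : Fin Gs.length → Fin 4) : Finset α :=
  Finset.univ.biUnion fun i => (pick (Gs.get i) (f i).val).2

/-- the complete subtree at a position (path from the root) -/
def subtreeAt : BTree α → List Bool → Option (BTree α)
  | t, [] => some t
  | leaf _, _ :: _ => none
  | node l _, false :: p => subtreeAt l p
  | node _ r, true :: p => subtreeAt r p

/-- the set of positions of internal nodes -/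
def internalPos : BTree α → Finset (List Bool)
  | leaf _ => ∅
  | node l r =>
      insert [] ((internalPos l).image (List.cons false) ∪
        (internalPos r).image (List.cons true))

end BTree

/-- labeled gene trees: each internal node carries `true` (Dup) or `false` (Spec) -/
inductive LTree (α : Type) where
  | leaf : α → LTree α
  | node : Bool → LTree α → LTree α → LTree α
deriving DecidableEq

namespace LTree

variable {α : Type} [DecidableEq α]

def leaves : LTree α → Finset α
  | leaf a => {a}
  | node _ l r => leaves l ∪ leaves r

/-- underlying unlabeled tree -/
def shape : LTree α → BTree α
  | leaf a => BTree.leaf a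
  | node _ l r => BTree.node (shape l) (shape r)

/-- the event label of the root (`none` for a leaf) -/
def rootEv : LTree α → Option Bool
  | leaf _ => none
  | node e _ _ => some e

inductive Subtree : LTree α → LTree α → Prop
  | refl (t : LTree α) : Subtree t t
  | left {t l r : LTree α} {e : Bool} : Subtree t l → Subtree t (node e l r)
  | right {t l r : LTree α} {e : Bool} : Subtree t r → Subtree t (node e l r)

/-- the subtree rooted at the lowest common ancestor of the leaf set `L` -/
def lcaSub : LTree α → Finset α → LTree α
  | leaf a, _ => leaf a
  | node e l r, L =>
      if L ⊆ leaves l then lcaSub l L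
      else if L ⊆ leaves r then lcaSub r L
      else node e l r

/-- `G` displays `G'` (topologically, ignoring labels) -/
def displaysL (G G' : LTree α) : Prop := BTree.displays (shape G) (shape G')

/-- `(G, ev_G)` is label-compatible with `(G', ev_{G'})` : every internal
node `x'` of `G'` has the same event label as `lca_G(L(x'))` -/
def labelCompatible (G G' : LTree α) : Prop :=
  ∀ (e : Bool) (l r : LTree α), Subtree (node e l r) G' →
    rootEv (lcaSub G (leaves (node e l r))) = some e

end LTree

namespace BTree

variable {α : Type} [DecidableEq α]

theorem leaves_nonempty' (t : BTree α) : t.leaves.Nonempty := by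
  induction t with
  | leaf a => exact ⟨a, by simp [leaves]⟩
  | node l r ihl ihr =>
      simp only [leaves]
      exact ihl.mono Finset.subset_union_left

theorem Subtree.trans' {a b c : BTree α} (h1 : Subtree a b) (h2 : Subtree b c) :
    Subtree a c := by
  induction h2 with
  | refl => exact h1
  | left _ ih => exact Subtree.left ih
  | right _ ih => exact Subtree.right ih

theorem leaves_subset_of_subtree {t T : BTree α} (h : Subtree t T) :
    t.leaves ⊆ T.leaves := by
  induction h with
  | refl => exact subset_rfl
  | left _ ih => exact ih.trans (by simp [leaves])
  | right _ ih => exact ih.trans (by simp [leaves])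

theorem nodup_of_subtree {t T : BTree α} (h : Subtree t T) (hnd : T.nodupLeaves) :
    t.nodupLeaves := by
  induction h with
  | refl => exact hnd
  | left _ ih => exact ih hnd.1
  | right _ ih => exact ih hnd.2.1

theorem eq_leaf_of_subtree {t : BTree α} {a : α} (h : Subtree t (leaf a)) :
    t = leaf a := by cases h; rfl

theorem comparable_of_subtrees {T s t : BTree α} (hnd : T.nodupLeaves)
    (hs : Subtree s T) (ht : Subtree t T)
    (hcap : ¬ Disjoint s.leaves t.leaves) : Subtree s t ∨ Subtree t s := by
  induction T with
  | leaf a =>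
      rw [eq_leaf_of_subtree hs, eq_leaf_of_subtree ht]
      exact Or.inl (Subtree.refl _)
  | node l r ihl ihr =>
      obtain ⟨hl, hr, hdlr⟩ := hnd
      cases hs with
      | refl => exact Or.inr ht
      | left hs' =>
          cases ht with
          | refl => exact Or.inl (Subtree.left hs')
          | left ht' => exact ihl hl hs' ht'
          | right ht' =>
              exact absurd (hdlr.mono (leaves_subset_of_subtree hs')
                (leaves_subset_of_subtree ht')) hcap
      | right hs' =>
          cases ht with
          | refl => exact Or.inl (Subtree.right hs')
          | left ht' =>
              exact absurd ((hdlr.symm.mono (leaves_subset_of_subtree hs')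
                (leaves_subset_of_subtree ht'))) hcap
          | right ht' => exact ihr hr hs' ht'

theorem eq_of_subtree_of_leaves_subset {t T : BTree α} (hnd : T.nodupLeaves)
    (h : Subtree t T) (hl : T.leaves ⊆ t.leaves) : t = T := by
  cases h with
  | refl => rfl
  | @left l r h' =>
      exfalso
      obtain ⟨a, ha⟩ := leaves_nonempty' r
      have har : a ∈ t.leaves := hl (by simp [leaves]; exact Or.inr ha)
      have hal : a ∈ l.leaves := leaves_subset_of_subtree h' har
      exact (Finset.disjoint_left.mp hnd.2.2 hal) ha
  | @right l r h' =>
      exfalso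
      obtain ⟨a, ha⟩ := leaves_nonempty' l
      have har : a ∈ t.leaves := hl (by simp [leaves]; exact Or.inl ha)
      have hal : a ∈ r.leaves := leaves_subset_of_subtree h' har
      exact (Finset.disjoint_left.mp hnd.2.2 ha) hal

theorem mem_unionLeaves {Gs : List (BTree α)} {a : α} :
    a ∈ unionLeaves Gs ↔ ∃ G ∈ Gs, a ∈ G.leaves := by
  induction Gs with
  | nil => simp [unionLeaves]
  | cons g gs ih => simp [unionLeaves] at ih ⊢; rw [ih]

theorem pairwise_disjoint_of_mem {Gs : List (BTree α)}
    (hdisj : Gs.Pairwise fun a b => Disjoint a.leaves b.leaves)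
    {Gi Gj : BTree α} (hGi : Gi ∈ Gs) (hGj : Gj ∈ Gs) (hne : Gi ≠ Gj) :
    Disjoint Gi.leaves Gj.leaves := by
  haveI : Std.Symm (fun a b : BTree α => Disjoint a.leaves b.leaves) := ⟨fun x y h => h.symm⟩
  have := List.Pairwise.forall hdisj
  exact this hGi hGj hne

/-- key helper: under the hypotheses, if a tree of `Gs` lies in the child `c`
of the lowest node `p`, another tree of `Gs` lies in `p`, and `c` does not
contain two trees of `Gs`, then `c` itself is an element of `Gs`. -/
theorem side_mem {GInit : BTree α} {Gs : List (BTree α)} (hnd : GInit.nodupLeaves)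
    (hsub : ∀ Gi ∈ Gs, Subtree Gi GInit)
    (hdisj : Gs.Pairwise fun a b => Disjoint a.leaves b.leaves)
    (hcover : unionLeaves Gs = GInit.leaves)
    {c d p : BTree α} (hp : p = node c d ∨ p = node d c)
    (hx : Subtree p GInit)
    (hnc : ¬ atLeastTwo Gs c)
    {Gi Gj : BTree α} (hGi : Gi ∈ Gs) (hGic : Subtree Gi c)
    (hGj : Gj ∈ Gs) (hij : Gi ≠ Gj) (hGjp : Subtree Gj p) : c ∈ Gs := by
  have hcp : Subtree c p := by
    rcases hp with rfl | rfl
    · exact Subtree.left (Subtree.refl c)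
    · exact Subtree.right (Subtree.refl c)
  have hndp : p.nodupLeaves := nodup_of_subtree hx hnd
  have hndc : c.nodupLeaves := nodup_of_subtree hcp hndp
  -- no tree of Gs contains p strictly or not
  have hnoP : ∀ G ∈ Gs, ¬ Subtree p G := by
    intro G hG hpG
    have hGiG : Subtree Gi G := (hGic.trans' hcp).trans' hpG
    have hGjG : Subtree Gj G := hGjp.trans' hpG
    by_cases hGGi : G = Gi
    · have hdj := pairwise_disjoint_of_mem hdisj hGj hG (fun h => hij (h.trans hGGi).symm)
      obtain ⟨a, ha⟩ := leaves_nonempty' Gj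
      exact Finset.disjoint_left.mp hdj ha (leaves_subset_of_subtree hGjG ha)
    · have hdj := pairwise_disjoint_of_mem hdisj hGi hG (fun h => hGGi h.symm)
      obtain ⟨a, ha⟩ := leaves_nonempty' Gi
      exact Finset.disjoint_left.mp hdj ha (leaves_subset_of_subtree hGiG ha)
  have hkey : c.leaves ⊆ Gi.leaves := by
    intro a hac
    have hap : a ∈ p.leaves := leaves_subset_of_subtree hcp hac
    have haI : a ∈ GInit.leaves := leaves_subset_of_subtree hx hap
    rw [← hcover] at haI
    obtain ⟨G, hG, haG⟩ := mem_unionLeaves.mp haI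
    have hcomp := comparable_of_subtrees hnd (hsub G hG) hx
      (fun h => Finset.disjoint_left.mp h haG hap)
    rcases hcomp with hGp | hpG
    swap
    · exact absurd hpG (hnoP G hG)
    -- G is a subtree of p
    have hGc : Subtree G c := by
      rcases hp with rfl | rfl
      · cases hGp with
        | refl => exact absurd (Subtree.refl _) (hnoP _ hG)
        | left h' => exact h'
        | right h' =>
            exact absurd (Finset.disjoint_left.mp hndp.2.2 hac
              (leaves_subset_of_subtree h' haG)) (fun h => h)
      · cases hGp with
        | refl => exact absurd (Subtree.refl _) (hnoP _ hG)
        | left h' =>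
            exact absurd (Finset.disjoint_left.mp hndp.2.2
              (leaves_subset_of_subtree h' haG) hac) (fun h => h)
        | right h' => exact h'
    by_cases hGGi : G = Gi
    · exact hGGi ▸ haG
    · exact absurd ⟨G, hG, Gi, hGi, hGGi, hGc, hGic⟩ hnc
  have : Gi = c := eq_of_subtree_of_leaves_subset hndc hGic hkey
  exact this ▸ hGi

theorem exists_lowest {GInit : BTree α} {Gs : List (BTree α)} :
    ∀ t : BTree α, Subtree t GInit → atLeastTwo Gs t →
    ∃ xl xr, Subtree (node xl xr) GInit ∧ atLeastTwo Gs (node xl xr) ∧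
      ¬ atLeastTwo Gs xl ∧ ¬ atLeastTwo Gs xr := by
  intro t
  induction t with
  | leaf a =>
      intro _ h2
      obtain ⟨Gi, _, Gj, _, hne, hi, hj⟩ := h2
      exact absurd ((eq_leaf_of_subtree hi).trans (eq_leaf_of_subtree hj).symm) hne
  | node l r ihl ihr =>
      intro hsubt h2
      by_cases h2l : atLeastTwo Gs l
      · exact ihl ((Subtree.left (Subtree.refl l)).trans' hsubt) h2l
      by_cases h2r : atLeastTwo Gs r
      · exact ihr ((Subtree.right (Subtree.refl r)).trans' hsubt) h2r
      exact ⟨l, r, hsubt, h2, h2l, h2r⟩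

end BTree

/-- there always is a lowest node `x` of `G^{Init}` with
`|𝒢(x)| ≥ 2`, and for every such node each child subtree is itself an
element of `𝒢`. -/
theorem stmt12 {α : Type} [DecidableEq α] (GInit : BTree α) (Gs : List (BTree α))
    (hnd : GInit.nodupLeaves)
    (hsub : ∀ Gi ∈ Gs, BTree.Subtree Gi GInit)
    (hdisj : Gs.Pairwise fun a b => Disjoint a.leaves b.leaves)
    (hcover : BTree.unionLeaves Gs = GInit.leaves)
    (hk : 2 ≤ Gs.length) :
    (∃ xl xr, BTree.Subtree (BTree.node xl xr) GInit ∧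
        BTree.atLeastTwo Gs (BTree.node xl xr) ∧
        ¬ BTree.atLeastTwo Gs xl ∧ ¬ BTree.atLeastTwo Gs xr) ∧
      ∀ xl xr, BTree.Subtree (BTree.node xl xr) GInit →
        BTree.atLeastTwo Gs (BTree.node xl xr) →
        ¬ BTree.atLeastTwo Gs xl → ¬ BTree.atLeastTwo Gs xr →
        xl ∈ Gs ∧ xr ∈ Gs := by
  constructor
  · -- existence
    match Gs, hk, hdisj, hsub with
    | G0 :: G1 :: rest, _, hdisj, hsub =>
      have hd01 : Disjoint G0.leaves G1.leaves :=
        (List.pairwise_cons.mp hdisj).1 G1 (by simp)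
      have hne : G0 ≠ G1 := by
        rintro rfl
        obtain ⟨a, ha⟩ := BTree.leaves_nonempty' G0
        exact Finset.disjoint_left.mp hd01 ha ha
      exact BTree.exists_lowest GInit (BTree.Subtree.refl GInit)
        ⟨G0, by simp, G1, by simp, hne, hsub G0 (by simp), hsub G1 (by simp)⟩
  · intro xl xr hx h2 hnl hnr
    obtain ⟨Gi, hGi, Gj, hGj, hne, hi, hj⟩ := h2
    have hnoRefl : ∀ {A B : BTree α}, A ∈ Gs → B ∈ Gs → A ≠ B →
        A = BTree.node xl xr → BTree.Subtree B (BTree.node xl xr) → False := by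
      intro A B hA hB hAB hAeq hBsub
      obtain ⟨a, ha⟩ := BTree.leaves_nonempty' B
      have := BTree.pairwise_disjoint_of_mem hdisj hB hA (fun h => hAB h.symm)
      exact Finset.disjoint_left.mp this ha
        (hAeq ▸ BTree.leaves_subset_of_subtree hBsub ha)
    cases hi with
    | refl => exact absurd (hnoRefl hGi hGj hne rfl hj) (fun h => h)
    | left hil =>
      cases hj with
      | refl => exact absurd (hnoRefl hGj hGi hne.symm rfl (BTree.Subtree.left hil)) (fun h => h)
      | left hjl => exact absurd ⟨Gi, hGi, Gj, hGj, hne, hil, hjl⟩ hnl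
      | right hjr =>
        exact ⟨BTree.side_mem hnd hsub hdisj hcover (Or.inl rfl) hx hnl hGi hil hGj hne
            (BTree.Subtree.right hjr),
          BTree.side_mem hnd hsub hdisj hcover (Or.inr rfl) hx hnr hGj hjr hGi hne.symm
            (BTree.Subtree.left hil)⟩
    | right hir =>
      cases hj with
      | refl => exact absurd (hnoRefl hGj hGi hne.symm rfl (BTree.Subtree.right hir)) (fun h => h)
      | right hjr => exact absurd ⟨Gi, hGi, Gj, hGj, hne, hir, hjr⟩ hnr
      | left hjl =>
        exact ⟨BTree.side_mem hnd hsub hdisj hcover (Or.inl rfl) hx hnl hGj hjl hGi hne.symm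
            (BTree.Subtree.right hir),
          BTree.side_mem hnd hsub hdisj hcover (Or.inr rfl) hx hnr hGi hir hGj hne
            (BTree.Subtree.left hjl)⟩
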